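/- arXiv:math/0001088 — 5 statements merged into one kernel-verified Lean document; each statement's English description precedes it below -/
import Mathlib

section
/- Let f : ℂ → ℂ be an entire function such that for every ε > 0 there exists a constant c(ε) > 0 with |f(z)| ≤ c(ε)·exp(ε·|z|) for all z ∈ ℂ. If f(n) = f(0) for every integer n ∈ ℤ, then f is constant. -/
/-!
Replace `f` by `h = f - f 0`, which vanishes on `ℤ` and satisfies `‖h z‖ ≤ C e^{‖z‖/5}`.
Dividing `h` by `∏_{|k| ≤ N} (z - k)` gives an entire function; on the circle `‖z‖ = 5N` each
factor has modulus at least `4N`, while at a point `‖w‖ ≤ N` each has modulus at most `2N`.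
By the maximum modulus principle `‖h w‖ ≤ 2^{-(2N+1)} C e^N = (C/2) (e/4)^N`, which tends to `0`.
-/

open Metric Finset Filter

theorem exists_eq_prod_sub_mul_of_eq_zero (s : Finset ℂ) :
    ∀ h : ℂ → ℂ, Differentiable ℂ h → (∀ a ∈ s, h a = 0) →
      ∃ F : ℂ → ℂ, Differentiable ℂ F ∧ ∀ z, h z = (∏ a ∈ s, (z - a)) * F z := by
  induction s using Finset.induction_on with
  | empty => exact fun h hh _ ↦ ⟨h, hh, by simp⟩
  | insert a s has ih =>
    intro h hh hzero
    have ha : h a = 0 := hzero a (mem_insert_self a s)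
    have hd : Differentiable ℂ (dslope h a) := by
      rw [← differentiableOn_univ] at hh ⊢
      exact (Complex.differentiableOn_dslope univ_mem).mpr hh
    have hd_zero : ∀ b ∈ s, dslope h a b = 0 := fun b hb ↦ by
      rw [dslope_of_ne _ (ne_of_mem_of_not_mem hb has), slope_def_field,
        hzero b (mem_insert_of_mem hb), ha, sub_zero, zero_div]
    obtain ⟨F, hF, hhF⟩ := ih _ hd hd_zero
    refine ⟨F, hF, fun z ↦ ?_⟩
    have := sub_smul_dslope h a z
    rw [ha, sub_zero, smul_eq_mul] at this
    rw [prod_insert has, mul_assoc, ← hhF, this]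

theorem norm_le_of_eq_zero_of_norm_le_on_sphere {h : ℂ → ℂ} (hh : Differentiable ℂ h)
    {s : Finset ℂ} (hzero : ∀ a ∈ s, h a = 0) {r R M : ℝ} (hs : ∀ a ∈ s, ‖a‖ ≤ r) (hrR : r < R)
    (hM : ∀ z ∈ sphere (0 : ℂ) R, ‖h z‖ ≤ M) {w : ℂ} (hw : ‖w‖ ≤ r) :
    ‖h w‖ ≤ (2 * r) ^ #s * (M / (R - r) ^ #s) := by
  obtain ⟨F, hF, hhF⟩ := exists_eq_prod_sub_mul_of_eq_zero s h hh hzero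
  have hR : 0 < R := (norm_nonneg w).trans_lt (hw.trans_lt hrR)
  have hF_sphere : ∀ z ∈ frontier (ball (0 : ℂ) R), ‖F z‖ ≤ M / (R - r) ^ #s := by
    intro z hz
    rw [frontier_ball _ hR.ne', mem_sphere_zero_iff_norm] at hz
    have hprod : (R - r) ^ #s ≤ ‖∏ a ∈ s, (z - a)‖ := by
      rw [norm_prod, ← prod_const]
      refine prod_le_prod (fun _ _ ↦ by linarith) fun a ha ↦ ?_
      linarith [norm_sub_norm_le z a, hs a ha]
    rw [le_div_iff₀ (pow_pos (sub_pos.2 hrR) _)]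
    calc ‖F z‖ * (R - r) ^ #s ≤ ‖F z‖ * ‖∏ a ∈ s, (z - a)‖ := by gcongr
      _ = ‖h z‖ := by rw [hhF, norm_mul, mul_comm]
      _ ≤ M := hM z (mem_sphere_zero_iff_norm.2 hz)
  have hFw : ‖F w‖ ≤ M / (R - r) ^ #s := by
    refine Complex.norm_le_of_forall_mem_frontier_norm_le isBounded_ball hF.diffContOnCl
      hF_sphere ?_
    rw [closure_ball _ hR.ne', mem_closedBall_zero_iff]
    exact hw.trans hrR.le
  have hprod : ‖∏ a ∈ s, (w - a)‖ ≤ (2 * r) ^ #s := by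
    rw [norm_prod, ← prod_const]
    refine prod_le_prod (fun _ _ ↦ norm_nonneg _) fun a ha ↦ ?_
    linarith [norm_sub_le w a, hs a ha]
  rw [hhF, norm_mul]
  exact mul_le_mul hprod hFw (norm_nonneg _) (pow_nonneg (by linarith [norm_nonneg w]) _)

theorem norm_le_of_eq_zero_on_int {h : ℂ → ℂ} (hh : Differentiable ℂ h)
    (hzero : ∀ n : ℤ, h n = 0) {N : ℕ} (hN : 0 < N) {M : ℝ}
    (hM : ∀ z ∈ sphere (0 : ℂ) (5 * N), ‖h z‖ ≤ M) {w : ℂ} (hw : ‖w‖ ≤ N) :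
    ‖h w‖ ≤ M / 2 ^ (2 * N + 1) := by
  set s : Finset ℂ := (Icc (-N : ℤ) N).image (↑)
  have hcard : #s = 2 * N + 1 := by
    rw [card_image_of_injective _ Int.cast_injective, Int.card_Icc]
    omega
  have hs : ∀ a ∈ s, ‖a‖ ≤ N := by
    simp only [s, mem_image, mem_Icc]
    rintro _ ⟨n, ⟨hn₁, hn₂⟩, rfl⟩
    rw [Complex.norm_intCast, ← Int.cast_abs, ← Int.cast_natCast]
    exact_mod_cast abs_le.2 ⟨hn₁, hn₂⟩
  have hN' : (0 : ℝ) < N := by exact_mod_cast hN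
  have := norm_le_of_eq_zero_of_norm_le_on_sphere hh
    (forall_mem_image.2 fun n _ ↦ hzero n) hs (by linarith) hM hw
  refine this.trans_eq ?_
  rw [show (5 * N - N : ℝ) = 2 * (2 * N) by ring, mul_pow 2 (2 * (N : ℝ)), hcard]
  field_simp

theorem eq_zero_of_eq_zero_on_int {h : ℂ → ℂ} (hh : Differentiable ℂ h)
    (hzero : ∀ n : ℤ, h n = 0) {C : ℝ} (hC : ∀ z, ‖h z‖ ≤ C * Real.exp (‖z‖ / 5)) (w : ℂ) :
    h w = 0 := by
  have hbound : ∀ N : ℕ, 0 < N → ‖w‖ ≤ N → ‖h w‖ ≤ C / 2 * (Real.exp 1 / 4) ^ N := by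
    intro N hN hw
    refine (norm_le_of_eq_zero_on_int hh hzero hN (M := C * Real.exp N) (fun z hz ↦ ?_)
      hw).trans_eq ?_
    · rw [mem_sphere_zero_iff_norm] at hz
      simpa [hz] using hC z
    · rw [div_pow, ← Real.exp_nat_mul, mul_one, pow_succ, pow_mul]
      ring
  have hq : Real.exp 1 / 4 < 1 := by
    have := Real.exp_one_lt_d9
    rw [div_lt_one (by norm_num)]
    linarith
  have hlim : Tendsto (fun N : ℕ ↦ C / 2 * (Real.exp 1 / 4) ^ N) atTop (nhds 0) := by
    simpa using (tendsto_pow_atTop_nhds_zero_of_lt_one (by positivity) hq).const_mul (C / 2)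
  have hev : ∀ᶠ N : ℕ in atTop, ‖h w‖ ≤ C / 2 * (Real.exp 1 / 4) ^ N := by
    filter_upwards [eventually_gt_atTop 0, eventually_ge_atTop ⌈‖w‖⌉₊] with N hN hwN
    exact hbound N hN ((Nat.le_ceil _).trans (by exact_mod_cast hwN))
  exact norm_le_zero_iff.1 (ge_of_tendsto hlim hev)

/-- Cartwright-type theorem: an entire function of arbitrarily small exponential
type which is constant on the integers is constant. -/
theorem cartwright_small_type_const_on_int
    (f : ℂ → ℂ) (hf : Differentiable ℂ f)
    (hgrowth : ∀ ε : ℝ, 0 < ε → ∃ c : ℝ, 0 < c ∧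
      ∀ z : ℂ, ‖f z‖ ≤ c * Real.exp (ε * ‖z‖))
    (hint : ∀ n : ℤ, f n = f 0) :
    ∀ z : ℂ, f z = f 0 := by
  obtain ⟨c, -, hc⟩ := hgrowth (1 / 5) (by norm_num)
  have hbound : ∀ z, ‖f z - f 0‖ ≤ (c + ‖f 0‖) * Real.exp (‖z‖ / 5) := fun z ↦
    calc ‖f z - f 0‖ ≤ ‖f z‖ + ‖f 0‖ := norm_sub_le _ _
      _ ≤ c * Real.exp (‖z‖ / 5) + ‖f 0‖ * Real.exp (‖z‖ / 5) := by
        gcongr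
        · simpa [div_eq_inv_mul] using hc z
        · exact le_mul_of_one_le_right (norm_nonneg _) (Real.one_le_exp (by positivity))
      _ = (c + ‖f 0‖) * Real.exp (‖z‖ / 5) := by ring
  exact fun z ↦ sub_eq_zero.1 <|
    eq_zero_of_eq_zero_on_int (hf.sub_const _) (fun n ↦ sub_eq_zero.2 (hint n)) hbound z
end

section
/- Let f : ℂ → ℂ be an entire function for which there exist constants c > 0 and σ' with 0 ≤ σ' < π such that |f(z)| ≤ c·exp(σ'·|z|) for all z ∈ ℂ. If f(n) = f(0) for every integer n ∈ ℤ, then f is constant. -/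
/-!
Put `g = f - f 0` and `F = g / sin (π z)`, which is entire because `g` vanishes on `ℤ`.
Since `|sin (π z)|` grows like `exp (π |Im z|)` away from the integers,
`|F z| ≤ A exp (σ' |Re z| - τ |Im z|)` with `τ = π - σ' > 0`. Phragmén–Lindelöf in the quadrant
bisected by the positive (resp. negative) real axis turns such a bound into
`|F x| ≤ A exp ((σ' - τ) |x|)` on `ℝ`, and Phragmén–Lindelöf in the four coordinate quadrants
turns this back into a bound of the same shape with `σ'` replaced by `σ' - τ`. After finitely
many steps the coefficient of `|Re z|` is `≤ 0`, so `F` is bounded, hence constant by Liouville,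
and it tends to `0` along the imaginary axis. Thus `F = 0` and `f = f 0`.
-/

open Complex Set Filter Topology Bornology Asymptotics
open scoped Real

theorem nonneg_of_norm_le_mul_exp {E : Type*} [SeminormedAddCommGroup E] {a : E} {C t : ℝ}
    (h : ‖a‖ ≤ C * Real.exp t) : 0 ≤ C :=
  nonneg_of_mul_nonneg_left ((norm_nonneg a).trans h) (Real.exp_pos t)

noncomputable def removableDiv (g s : ℂ → ℂ) (z : ℂ) : ℂ :=
  if s z = 0 then deriv g z / deriv s z else g z / s z

section removableDiv

variable {g s : ℂ → ℂ}

theorem removableDiv_of_ne_zero {z : ℂ} (hz : s z ≠ 0) : removableDiv g s z = g z / s z :=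
  if_neg hz

theorem mul_removableDiv (hzero : ∀ z, s z = 0 → g z = 0) (z : ℂ) :
    s z * removableDiv g s z = g z := by
  by_cases hz : s z = 0
  · rw [hz, zero_mul, hzero z hz]
  · rw [removableDiv_of_ne_zero hz, mul_div_cancel₀ _ hz]

theorem norm_removableDiv_le {m : ℝ} {z : ℂ} (hm : 0 < m) (hs : m ≤ ‖s z‖) :
    ‖removableDiv g s z‖ ≤ ‖g z‖ / m := by
  rw [removableDiv_of_ne_zero (norm_pos_iff.1 (hm.trans_le hs)), norm_div]
  exact div_le_div_of_nonneg_left (norm_nonneg _) hm hs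

theorem removableDiv_eventuallyEq_dslope_div {z₀ : ℂ} (hs : DifferentiableAt ℂ s z₀)
    (hg₀ : g z₀ = 0) (hs₀ : s z₀ = 0) (hs' : deriv s z₀ ≠ 0) :
    removableDiv g s =ᶠ[𝓝 z₀] fun z => dslope g z₀ z / dslope s z₀ z := by
  have hne : ∀ᶠ z in 𝓝 z₀, dslope s z₀ z ≠ 0 :=
    (continuousAt_dslope_same.2 hs).eventually_ne (by rwa [dslope_same])
  filter_upwards [hne] with z hz
  rcases eq_or_ne z z₀ with rfl | hzz₀
  · simp only [removableDiv, if_pos hs₀, dslope_same]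
  · have hsz : s z = (z - z₀) * dslope s z₀ z := by
      rw [← smul_eq_mul, sub_smul_dslope, hs₀, sub_zero]
    have hgz : g z = (z - z₀) * dslope g z₀ z := by
      rw [← smul_eq_mul, sub_smul_dslope, hg₀, sub_zero]
    have hzz₀' : z - z₀ ≠ 0 := sub_ne_zero.2 hzz₀
    rw [removableDiv_of_ne_zero (by rw [hsz]; exact mul_ne_zero hzz₀' hz), hsz, hgz,
      mul_div_mul_left _ _ hzz₀']

theorem differentiable_removableDiv (hg : Differentiable ℂ g) (hs : Differentiable ℂ s)
    (hzero : ∀ z, s z = 0 → g z = 0 ∧ deriv s z ≠ 0) :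
    Differentiable ℂ (removableDiv g s) := by
  intro z₀
  by_cases hs₀ : s z₀ = 0
  · obtain ⟨hg₀, hs'⟩ := hzero z₀ hs₀
    have hdslope {f : ℂ → ℂ} (hf : Differentiable ℂ f) : Differentiable ℂ (dslope f z₀) :=
      differentiableOn_univ.1 ((differentiableOn_dslope univ_mem).2 hf.differentiableOn)
    refine ((hdslope hg z₀).div (hdslope hs z₀) ?_).congr_of_eventuallyEq
      (removableDiv_eventuallyEq_dslope_div (hs z₀) hg₀ hs₀ hs')
    rwa [dslope_same]
  · have hev : removableDiv g s =ᶠ[𝓝 z₀] fun z => g z / s z := by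
      filter_upwards [(hs.continuous.continuousAt (x := z₀)).eventually_ne hs₀] with z hz
      exact removableDiv_of_ne_zero hz
    exact ((hg z₀).div (hs z₀) hs₀).congr_of_eventuallyEq hev

end removableDiv

theorem Complex.norm_sin_sq (z : ℂ) : ‖sin z‖ ^ 2 = Real.sin z.re ^ 2 + Real.sinh z.im ^ 2 := by
  rw [← normSq_eq_norm_sq, sin_eq, ← ofReal_sin, ← ofReal_cosh, ← ofReal_cos, ← ofReal_sinh,
    ← ofReal_mul, ← ofReal_mul, normSq_add_mul_I]
  nlinarith [Real.sin_sq_add_cos_sq z.re, Real.cosh_sq z.im]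

theorem Complex.abs_sin_re_le_norm_sin (z : ℂ) : |Real.sin z.re| ≤ ‖sin z‖ :=
  abs_le_of_sq_le_sq (by nlinarith [norm_sin_sq z, sq_nonneg (Real.sinh z.im)]) (norm_nonneg _)

theorem Complex.abs_sinh_im_le_norm_sin (z : ℂ) : |Real.sinh z.im| ≤ ‖sin z‖ :=
  abs_le_of_sq_le_sq (by nlinarith [norm_sin_sq z, sq_nonneg (Real.sin z.re)]) (norm_nonneg _)

theorem Real.exp_div_four_le_sinh {t : ℝ} (ht : 1 / 2 ≤ t) : exp t / 4 ≤ sinh t := by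
  have h2 : 2 ≤ exp t * exp t := by
    rw [← exp_add]; linarith [add_one_le_exp (t + t)]
  have h1 : exp (-t) * exp t = 1 := by rw [← exp_add, neg_add_cancel, exp_zero]
  rw [sinh_eq]
  nlinarith [exp_pos t, exp_pos (-t)]

theorem sin_pi_mul_eq_zero_iff {z : ℂ} : sin (π * z) = 0 ↔ ∃ n : ℤ, z = n := by
  have hπ : (π : ℂ) ≠ 0 := ofReal_ne_zero.2 Real.pi_ne_zero
  rw [sin_eq_zero_iff]
  refine exists_congr fun n => ⟨fun h => mul_left_cancel₀ hπ ?_, fun h => ?_⟩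
  · rw [h, mul_comm]
  · rw [h, mul_comm]

theorem deriv_sin_pi_mul_ne_zero {z : ℂ} (hz : sin (π * z) = 0) :
    deriv (fun w => sin (π * w)) z ≠ 0 := by
  have hcos : cos (π * z) ≠ 0 := by
    rcases sin_eq_zero_iff_cos_eq.1 hz with h | h <;> rw [h] <;> norm_num
  have h : HasDerivAt (fun w => sin (π * w)) (cos (π * z) * π) z := by
    simpa using ((hasDerivAt_id z).const_mul (π : ℂ)).csin
  rw [h.deriv]
  exact mul_ne_zero hcos (ofReal_ne_zero.2 Real.pi_ne_zero)

theorem exp_div_four_le_norm_sin_pi_mul {z : ℂ} (hz : 1 / 2 ≤ |z.im|) :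
    Real.exp (π * |z.im|) / 4 ≤ ‖sin (π * z)‖ := by
  have hπ := Real.pi_gt_three
  calc Real.exp (π * |z.im|) / 4 ≤ Real.sinh (π * |z.im|) :=
        Real.exp_div_four_le_sinh (by nlinarith)
    _ = |Real.sinh (π * z).im| := by
        rw [im_ofReal_mul, Real.abs_sinh, abs_mul, abs_of_pos Real.pi_pos]
    _ ≤ ‖sin (π * z)‖ := abs_sinh_im_le_norm_sin _

theorem one_le_norm_sin_pi_mul {w : ℂ} {n : ℤ} (hw : |w.re - n| = 1 / 2) :
    1 ≤ ‖sin (π * w)‖ := by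
  have hcos : Real.cos (π * w.re) = 0 := by
    rw [Real.cos_eq_zero_iff]
    rcases abs_eq (by norm_num : (0 : ℝ) ≤ 1 / 2) |>.1 hw with h | h
    · exact ⟨n, by rw [show w.re = n + 1 / 2 by linarith]; ring⟩
    · exact ⟨n - 1, by rw [show w.re = n - 1 / 2 by linarith]; push_cast; ring⟩
  have h := abs_sin_re_le_norm_sin (π * w)
  rw [re_ofReal_mul] at h
  nlinarith [Real.sin_sq_add_cos_sq (π * w.re), sq_abs (Real.sin (π * w.re)),
    abs_nonneg (Real.sin (π * w.re))]

def unitSquare (n : ℤ) : Set ℂ :=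
  Ioo (n - 1 / 2 : ℝ) (n + 1 / 2) ×ℂ Ioo (-(1 / 2)) (1 / 2)

theorem closure_unitSquare (n : ℤ) :
    closure (unitSquare n) = Icc (n - 1 / 2 : ℝ) (n + 1 / 2) ×ℂ Icc (-(1 / 2)) (1 / 2) := by
  rw [unitSquare, closure_reProdIm, closure_Ioo (by linarith), closure_Ioo (by norm_num)]

theorem one_div_four_le_norm_sin_pi_mul_of_mem_frontier {n : ℤ} {w : ℂ}
    (hw : w ∈ frontier (unitSquare n)) : 1 / 4 ≤ ‖sin (π * w)‖ := by
  have hn : (n - 1 / 2 : ℝ) < n + 1 / 2 := by linarith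
  have hhalf : (-(1 / 2) : ℝ) < 1 / 2 := by norm_num
  rw [unitSquare, frontier_reProdIm, closure_Ioo hn.ne, closure_Ioo hhalf.ne, frontier_Ioo hn,
    frontier_Ioo hhalf] at hw
  rcases hw with ⟨-, him⟩ | ⟨hre, -⟩
  · have him' : |w.im| = 1 / 2 := by
      obtain h | h : w.im = -(1 / 2) ∨ w.im = 1 / 2 := him <;> rw [h] <;> norm_num
    refine le_trans ?_ (exp_div_four_le_norm_sin_pi_mul him'.ge)
    linarith [Real.one_le_exp (by positivity : 0 ≤ π * |w.im|)]
  · have hre' : |w.re - n| = 1 / 2 := by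
      obtain h | h : w.re = n - 1 / 2 ∨ w.re = n + 1 / 2 := hre <;> rw [h] <;> norm_num
    linarith [one_le_norm_sin_pi_mul hre']

section sinDiv

variable {g : ℂ → ℂ} {C σ : ℝ}

theorem apply_eq_zero_of_sin_pi_mul_eq_zero (hgz : ∀ n : ℤ, g n = 0) {z : ℂ}
    (hz : sin (π * z) = 0) : g z = 0 := by
  obtain ⟨n, rfl⟩ := sin_pi_mul_eq_zero_iff.1 hz
  exact hgz n

theorem differentiable_removableDiv_sin (hg : Differentiable ℂ g) (hgz : ∀ n : ℤ, g n = 0) :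
    Differentiable ℂ (removableDiv g fun z => sin (π * z)) :=
  differentiable_removableDiv hg (differentiable_sin.comp (differentiable_id.const_mul _))
    fun _ hz => ⟨apply_eq_zero_of_sin_pi_mul_eq_zero hgz hz, deriv_sin_pi_mul_ne_zero hz⟩

theorem norm_removableDiv_sin_le_of_half_le_abs_im
    (hgrowth : ∀ z, ‖g z‖ ≤ C * Real.exp (σ * ‖z‖)) (hσ : 0 ≤ σ) {z : ℂ} (hz : 1 / 2 ≤ |z.im|) :
    ‖removableDiv g (fun z => sin (π * z)) z‖
      ≤ 4 * C * Real.exp (σ * |z.re| - (π - σ) * |z.im|) := by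
  have hC := nonneg_of_norm_le_mul_exp (hgrowth 0)
  refine (norm_removableDiv_le (s := fun z => sin (π * z)) (by positivity)
    (exp_div_four_le_norm_sin_pi_mul hz)).trans ?_
  rw [div_le_iff₀ (by positivity)]
  calc ‖g z‖ ≤ C * Real.exp (σ * (|z.re| + |z.im|)) := by
        refine (hgrowth z).trans ?_
        gcongr
        exact norm_le_abs_re_add_abs_im z
    _ = 4 * C * Real.exp (σ * |z.re| - (π - σ) * |z.im|) * (Real.exp (π * |z.im|) / 4) := by
        rw [show σ * (|z.re| + |z.im|) = σ * |z.re| - (π - σ) * |z.im| + π * |z.im| by ring,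
          Real.exp_add]
        ring

theorem norm_removableDiv_sin_le_of_abs_im_le (hg : Differentiable ℂ g) (hgz : ∀ n : ℤ, g n = 0)
    (hgrowth : ∀ z, ‖g z‖ ≤ C * Real.exp (σ * ‖z‖)) (hσ : 0 ≤ σ) {z : ℂ} (hz : |z.im| ≤ 1 / 2) :
    ‖removableDiv g (fun z => sin (π * z)) z‖ ≤ 4 * C * Real.exp (σ * (|z.re| + 2)) := by
  have hC := nonneg_of_norm_le_mul_exp (hgrowth 0)
  have hzn := abs_le.1 (abs_sub_round z.re)
  have hzU : z ∈ closure (unitSquare (round z.re)) := by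
    rw [closure_unitSquare]
    exact ⟨⟨by linarith, by linarith⟩, abs_le.1 hz⟩
  refine Complex.norm_le_of_forall_mem_frontier_norm_le (U := unitSquare (round z.re))
    ((Metric.isBounded_Ioo _ _).reProdIm (Metric.isBounded_Ioo _ _))
    (differentiable_removableDiv_sin hg hgz).diffContOnCl (fun w hw => ?_) hzU
  obtain ⟨⟨hwre₁, hwre₂⟩, hwim⟩ := closure_unitSquare _ ▸ frontier_subset_closure hw
  have hwnorm : ‖w‖ ≤ |z.re| + 2 := by
    have hwre : |w.re| ≤ |z.re| + 1 := abs_le.2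
      ⟨by linarith [neg_abs_le z.re], by linarith [le_abs_self z.re]⟩
    linarith [norm_le_abs_re_add_abs_im w, abs_le.2 hwim]
  calc ‖removableDiv g (fun z => sin (π * z)) w‖ ≤ ‖g w‖ / (1 / 4) :=
        norm_removableDiv_le (s := fun z => sin (π * z)) (by norm_num)
          (one_div_four_le_norm_sin_pi_mul_of_mem_frontier hw)
    _ ≤ C * Real.exp (σ * (|z.re| + 2)) / (1 / 4) := by
        gcongr
        exact (hgrowth w).trans (by gcongr)
    _ = 4 * C * Real.exp (σ * (|z.re| + 2)) := by ring

end sinDiv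

theorem exists_isBigO_exp_rpow_of_norm_le {E : Type*} [Norm E] {G : ℂ → E} {M B : ℝ}
    (h : ∀ z, ‖G z‖ ≤ M * Real.exp (B * ‖z‖)) (l : Filter ℂ) :
    ∃ c < (2 : ℝ), ∃ B, G =O[l] fun z => Real.exp (B * ‖z‖ ^ c) :=
  ⟨1, one_lt_two, B, IsBigO.of_bound M <| .of_forall fun z => by
    simpa only [Real.rpow_one, Real.norm_eq_abs, Real.abs_exp] using h z⟩

theorem norm_mul_cexp_neg_le_iff (a w : ℂ) {C : ℝ} :
    ‖a * cexp (-w)‖ ≤ C ↔ ‖a‖ ≤ C * Real.exp w.re := by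
  rw [norm_mul, norm_exp, neg_re, Real.exp_neg, ← div_eq_mul_inv, div_le_iff₀ (Real.exp_pos _)]

theorem exists_sign_mul_nonneg (x : ℝ) : ∃ s : ℝ, (s = 1 ∨ s = -1) ∧ 0 ≤ s * x := by
  rcases le_total 0 x with hx | hx
  · exact ⟨1, .inl rfl, by linarith⟩
  · exact ⟨-1, .inr rfl, by linarith⟩

theorem sign_mul_eq_abs {s x : ℝ} (hs : s = 1 ∨ s = -1) (h : 0 ≤ s * x) : s * x = |x| := by
  rcases hs with rfl | rfl
  · rw [one_mul] at h ⊢; exact (abs_of_nonneg h).symm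
  · rw [neg_one_mul] at h ⊢; exact (abs_of_nonpos (neg_nonneg.1 h)).symm

/-- Phragmén–Lindelöf applied to `G z * exp (-(a + b * I) * z)`, whose modulus is
`|G z| * exp (-(a * Re z - b * Im z))`. -/
theorem norm_le_mul_exp_of_quadrant {G : ℂ → ℂ} (hG : Differentiable ℂ G) {M B : ℝ}
    (hgrowth : ∀ z, ‖G z‖ ≤ M * Real.exp (B * ‖z‖)) {a b C sx sy : ℝ}
    (hsx : sx = 1 ∨ sx = -1) (hsy : sy = 1 ∨ sy = -1)
    (hre : ∀ x : ℝ, 0 ≤ sx * x → ‖G x‖ ≤ C * Real.exp (a * x))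
    (him : ∀ y : ℝ, 0 ≤ sy * y → ‖G (y * I)‖ ≤ C * Real.exp (-(b * y)))
    {z : ℂ} (hzx : 0 ≤ sx * z.re) (hzy : 0 ≤ sy * z.im) :
    ‖G z‖ ≤ C * Real.exp (a * z.re - b * z.im) := by
  set μ : ℂ := ⟨a, b⟩
  have hμ (w : ℂ) : (μ * w).re = a * w.re - b * w.im := mul_re μ w
  set H : ℂ → ℂ := fun w => G w * cexp (-(μ * w))
  have hd {U : Set ℂ} : DiffContOnCl ℂ H U :=
    (hG.mul (differentiable_id.const_mul μ).neg.cexp).diffContOnCl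
  have hO (l : Filter ℂ) : ∃ c < (2 : ℝ), ∃ B, H =O[l] fun z => Real.exp (B * ‖z‖ ^ c) := by
    refine exists_isBigO_exp_rpow_of_norm_le (M := M) (B := B + ‖μ‖) (fun w => ?_) l
    have hμw : -(μ * w).re ≤ ‖μ‖ * ‖w‖ := by
      simpa only [norm_mul] using (neg_le_abs _).trans (abs_re_le_norm (μ * w))
    have hM := nonneg_of_norm_le_mul_exp (hgrowth 0)
    calc ‖H w‖ = ‖G w‖ * Real.exp (-(μ * w).re) := by
          simp only [H, norm_mul, norm_exp, neg_re]
      _ ≤ M * Real.exp (B * ‖w‖) * Real.exp (‖μ‖ * ‖w‖) := by gcongr; exact hgrowth w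
      _ = M * Real.exp ((B + ‖μ‖) * ‖w‖) := by rw [mul_assoc, ← Real.exp_add, add_mul]
  have hre' (x : ℝ) (hx : 0 ≤ sx * x) : ‖H x‖ ≤ C :=
    (norm_mul_cexp_neg_le_iff _ _).2 (by simpa [hμ] using hre x hx)
  have him' (y : ℝ) (hy : 0 ≤ sy * y) : ‖H (y * I)‖ ≤ C :=
    (norm_mul_cexp_neg_le_iff _ _).2 (by simpa [hμ] using him y hy)
  refine hμ z ▸ (norm_mul_cexp_neg_le_iff _ _).1 (?_ : ‖H z‖ ≤ C)
  rcases hsx with rfl | rfl <;> rcases hsy with rfl | rfl <;>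
    simp only [one_mul, neg_one_mul, neg_nonneg] at hre' him' hzx hzy
  · exact PhragmenLindelof.quadrant_I hd (hO _) hre' him' hzx hzy
  · exact PhragmenLindelof.quadrant_IV hd (hO _) hre' him' hzx hzy
  · exact PhragmenLindelof.quadrant_II hd (hO _) hre' him' hzx hzy
  · exact PhragmenLindelof.quadrant_III hd (hO _) hre' him' hzx hzy

def ExpBound (F : ℂ → ℂ) (A σ τ : ℝ) : Prop :=
  ∀ z : ℂ, ‖F z‖ ≤ A * Real.exp (σ * |z.re| - τ * |z.im|)

namespace ExpBound

variable {F : ℂ → ℂ} {A σ τ : ℝ}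

theorem nonneg (h : ExpBound F A σ τ) : 0 ≤ A :=
  nonneg_of_norm_le_mul_exp (h 0)

theorem norm_le_exp_norm (h : ExpBound F A σ τ) (hτ : 0 ≤ τ) (z : ℂ) :
    ‖F z‖ ≤ A * Real.exp (|σ| * ‖z‖) := by
  refine (h z).trans (mul_le_mul_of_nonneg_left (Real.exp_le_exp.2 ?_) h.nonneg)
  have : σ * |z.re| ≤ |σ| * ‖z‖ :=
    (le_abs_self _).trans (by rw [abs_mul, abs_abs]; gcongr; exact abs_re_le_norm z)
  nlinarith [abs_nonneg z.im]

theorem comp_neg (h : ExpBound F A σ τ) : ExpBound (fun z => F (-z)) A σ τ := fun z => by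
  simpa only [neg_re, neg_im, abs_neg] using h (-z)

theorem of_axes (hF : Differentiable ℂ F) {M B : ℝ}
    (hgrowth : ∀ z, ‖F z‖ ≤ M * Real.exp (B * ‖z‖))
    (hre : ∀ x : ℝ, ‖F x‖ ≤ A * Real.exp (σ * |x|))
    (him : ∀ y : ℝ, ‖F (y * I)‖ ≤ A * Real.exp (-(τ * |y|))) :
    ExpBound F A σ τ := by
  intro z
  obtain ⟨sx, hsx, hzx⟩ := exists_sign_mul_nonneg z.re
  obtain ⟨sy, hsy, hzy⟩ := exists_sign_mul_nonneg z.im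
  have key := norm_le_mul_exp_of_quadrant (a := σ * sx) (b := τ * sy) (C := A) hF hgrowth hsx hsy
    (fun x hx => by simpa only [← sign_mul_eq_abs hsx hx, mul_assoc] using hre x)
    (fun y hy => by simpa only [← sign_mul_eq_abs hsy hy, mul_assoc] using him y) hzx hzy
  simpa only [← sign_mul_eq_abs hsx hzx, ← sign_mul_eq_abs hsy hzy, mul_assoc] using key

theorem norm_le_of_abs_re_eq_abs_im (h : ExpBound F A σ τ) {z : ℂ} (hz : |z.re| = |z.im|) :
    ‖F z‖ ≤ A * Real.exp ((σ - τ) * |z.re|) := by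
  simpa only [← hz, sub_mul] using h z

/-- Phragmén–Lindelöf in the quadrant `(1 - I) * {0 ≤ Re w, 0 ≤ Im w}`, which is bisected by the
positive real axis and bounded by the diagonals. -/
theorem norm_ofReal_le_of_nonneg (hF : Differentiable ℂ F) (h : ExpBound F A σ τ) (hτ : 0 ≤ τ)
    {x : ℝ} (hx : 0 ≤ x) : ‖F x‖ ≤ A * Real.exp ((σ - τ) * x) := by
  have hG : Differentiable ℂ fun w => F ((1 - I) * w) := hF.comp (differentiable_id.const_mul _)
  have hgrowth (w : ℂ) : ‖F ((1 - I) * w)‖ ≤ A * Real.exp (|σ| * ‖1 - I‖ * ‖w‖) := by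
    simpa only [norm_mul, mul_assoc] using h.norm_le_exp_norm hτ ((1 - I) * w)
  have hre (t : ℝ) (ht : 0 ≤ 1 * t) : ‖F ((1 - I) * t)‖ ≤ A * Real.exp ((σ - τ) * t) := by
    have hz : ((1 - I) * t).re = t ∧ ((1 - I) * t).im = -t := by simp
    simpa [hz, abs_of_nonneg (one_mul t ▸ ht)]
      using h.norm_le_of_abs_re_eq_abs_im (z := (1 - I) * t) (by rw [hz.1, hz.2, abs_neg])
  have him (t : ℝ) (ht : 0 ≤ 1 * t) :
      ‖F ((1 - I) * (t * I))‖ ≤ A * Real.exp (-((τ - σ) * t)) := by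
    have hz : ((1 - I) * (t * I)).re = t ∧ ((1 - I) * (t * I)).im = t := by simp
    simpa [hz, abs_of_nonneg (one_mul t ▸ ht), ← neg_mul]
      using h.norm_le_of_abs_re_eq_abs_im (z := (1 - I) * (t * I)) (by rw [hz.1, hz.2])
  have key := norm_le_mul_exp_of_quadrant (sx := 1) (sy := 1) hG hgrowth (.inl rfl) (.inl rfl)
    hre him (z := ⟨x / 2, x / 2⟩) (by rw [one_mul]; positivity) (by rw [one_mul]; positivity)
  have hw : (1 - I) * ⟨x / 2, x / 2⟩ = x := by
    apply Complex.ext <;> simp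
  rw [hw] at key
  refine key.trans_eq (congrArg _ (congrArg _ ?_))
  dsimp only
  ring

theorem norm_ofReal_le (hF : Differentiable ℂ F) (h : ExpBound F A σ τ) (hτ : 0 ≤ τ) (x : ℝ) :
    ‖F x‖ ≤ A * Real.exp ((σ - τ) * |x|) := by
  rcases le_total 0 x with hx | hx
  · simpa only [abs_of_nonneg hx] using h.norm_ofReal_le_of_nonneg hF hτ hx
  · simpa [abs_of_nonpos hx] using
      h.comp_neg.norm_ofReal_le_of_nonneg (hF.comp differentiable_neg) hτ (neg_nonneg.2 hx)

theorem sub (hF : Differentiable ℂ F) (h : ExpBound F A σ τ) (hτ : 0 ≤ τ) :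
    ExpBound F A (σ - τ) τ :=
  of_axes hF (h.norm_le_exp_norm hτ) (h.norm_ofReal_le hF hτ) fun y => by
    simpa using h (y * I)

theorem sub_nat_mul (hF : Differentiable ℂ F) (h : ExpBound F A σ τ) (hτ : 0 ≤ τ) (n : ℕ) :
    ExpBound F A (σ - n * τ) τ := by
  induction n with
  | zero => simpa using h
  | succ n ih => simpa [add_mul, sub_sub] using ih.sub hF hτ

theorem eq_zero (hF : Differentiable ℂ F) (h : ExpBound F A σ τ) (hτ : 0 < τ) : F = 0 := by
  obtain ⟨n, hn⟩ := exists_nat_ge (σ / τ)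
  have hdecay (z : ℂ) : ‖F z‖ ≤ A * Real.exp (-(τ * |z.im|)) := by
    refine (h.sub_nat_mul hF hτ.le n z).trans (mul_le_mul_of_nonneg_left ?_ h.nonneg)
    have : σ - n * τ ≤ 0 := by rw [div_le_iff₀ hτ] at hn; linarith
    gcongr
    nlinarith [abs_nonneg z.re]
  have hconst (z : ℂ) : F z = F 0 := by
    refine hF.apply_eq_apply_of_bounded (isBounded_iff_forall_norm_le.2 ⟨A, ?_⟩) z 0
    rintro _ ⟨w, rfl⟩
    exact (hdecay w).trans (mul_le_of_le_one_right h.nonneg (Real.exp_le_one_iff.2 (by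
      nlinarith [abs_nonneg w.im])))
  have hlim : Tendsto (fun y : ℝ => A * Real.exp (-(τ * y))) atTop (𝓝 0) := by
    simpa using (Real.tendsto_exp_neg_atTop_nhds_zero.comp
      (tendsto_id.const_mul_atTop hτ)).const_mul A
  have h0 : ‖F 0‖ ≤ 0 := ge_of_tendsto hlim <| (eventually_ge_atTop 0).mono fun y hy => by
    simpa [hconst (y * I), abs_of_nonneg hy] using hdecay (y * I)
  ext z
  rw [hconst z, Pi.zero_apply, ← norm_le_zero_iff]
  exact h0

end ExpBound

theorem expBound_removableDiv_sin {g : ℂ → ℂ} (hg : Differentiable ℂ g) (hgz : ∀ n : ℤ, g n = 0)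
    {C σ : ℝ} (hgrowth : ∀ z, ‖g z‖ ≤ C * Real.exp (σ * ‖z‖)) (hσ : 0 ≤ σ) (hσπ : σ ≤ π) :
    ExpBound (removableDiv g fun z => sin (π * z)) (4 * C * Real.exp (2 * σ + π)) σ (π - σ) := by
  have hC := nonneg_of_norm_le_mul_exp (hgrowth 0)
  intro z
  rw [mul_assoc, ← Real.exp_add]
  rcases le_total (1 / 2) |z.im| with hz | hz
  · refine (norm_removableDiv_sin_le_of_half_le_abs_im hgrowth hσ hz).trans ?_
    gcongr
    linarith [Real.pi_pos]
  · refine (norm_removableDiv_sin_le_of_abs_im_le hg hgz hgrowth hσ hz).trans ?_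
    gcongr
    nlinarith [abs_nonneg z.im]

theorem carlson_type_lt_pi_const_on_int_general
    (f : ℂ → ℂ) (hf : Differentiable ℂ f)
    (c σ' : ℝ) (hσ'0 : 0 ≤ σ') (hσ' : σ' < Real.pi)
    (hgrowth : ∀ z : ℂ, ‖f z‖ ≤ c * Real.exp (σ' * ‖z‖))
    (hint : ∀ n : ℤ, f n = f 0) :
    ∀ z : ℂ, f z = f 0 := by
  set g : ℂ → ℂ := fun z => f z - f 0
  have hg : Differentiable ℂ g := hf.sub_const _
  have hgz (n : ℤ) : g n = 0 := sub_eq_zero.2 (hint n)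
  have hggrowth (z : ℂ) : ‖g z‖ ≤ 2 * c * Real.exp (σ' * ‖z‖) := by
    have h0 : ‖f 0‖ ≤ c := by simpa using hgrowth 0
    have h1 : 1 ≤ Real.exp (σ' * ‖z‖) := Real.one_le_exp (by positivity)
    nlinarith [norm_sub_le (f z) (f 0), hgrowth z, norm_nonneg (f 0)]
  have hF : removableDiv g (fun z => sin (π * z)) = 0 :=
    (expBound_removableDiv_sin hg hgz hggrowth hσ'0 hσ'.le).eq_zero
      (differentiable_removableDiv_sin hg hgz) (sub_pos.2 hσ')
  intro z
  have hz := mul_removableDiv (s := fun z => sin (π * z))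
    (fun _ => apply_eq_zero_of_sin_pi_mul_eq_zero hgz) z
  rw [hF, Pi.zero_apply, mul_zero] at hz
  exact sub_eq_zero.1 hz.symm

/-- Quantitative Cartwright/Carlson theorem: an entire function of exponential
type strictly less than π which is constant on the integers is constant. -/
theorem carlson_type_lt_pi_const_on_int
    (f : ℂ → ℂ) (hf : Differentiable ℂ f)
    (c σ' : ℝ) (hc : 0 < c) (hσ'0 : 0 ≤ σ') (hσ' : σ' < Real.pi)
    (hgrowth : ∀ z : ℂ, ‖f z‖ ≤ c * Real.exp (σ' * ‖z‖))
    (hint : ∀ n : ℤ, f n = f 0) :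
    ∀ z : ℂ, f z = f 0 :=
  carlson_type_lt_pi_const_on_int_general f hf c σ' hσ'0 hσ' hgrowth hint
end

section
/- Let f : ℂⁿ → ℂ be an entire function such that for every ε > 0 there exists a constant c(ε) > 0 with |f(z)| ≤ c(ε)·exp(ε·‖z‖) for all z ∈ ℂⁿ. Suppose v ∈ ℂⁿ is a nonzero vector such that f(z + v) = f(z) for all z ∈ ℂⁿ. Then f(z + w·v) = f(z) for all z ∈ ℂⁿ and all complex scalars w ∈ ℂ; that is, f is constant along every complex line in the direction v. -/
/-!
On the line `w ↦ z + w • v` the function `f` becomes a `1`-periodic entire function `g` of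
exponential type `τ < 2π`. Through `q = exp (2πi w)` it descends to `ℂ \ {0}`, where it is
`O(‖q‖ ^ (-τ / 2π)) = o(q⁻¹)` at `0`; so the singularity at `0` is removable and `g` is bounded
on the upper half-plane. Doing the same for `w ↦ g (-w)` bounds `g` on the lower half-plane, and
Liouville's theorem makes `g` constant.
-/

open scoped Real
open Complex Filter Asymptotics Topology Metric

namespace Function.Periodic

theorem norm_invQParam_le (h : ℝ) (q : ℂ) :
    ‖invQParam h q‖ ≤ |h| / (2 * π) * (|Real.log ‖q‖| + π) := by
  have hlog : ‖log q‖ ≤ |Real.log ‖q‖| + π := by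
    calc ‖log q‖ ≤ |(log q).re| + |(log q).im| := norm_le_abs_re_add_abs_im _
      _ ≤ |Real.log ‖q‖| + π := by rw [log_re, log_im]; gcongr; exact abs_arg_le_pi q
  calc ‖invQParam h q‖ = |h| / (2 * π) * ‖log q‖ := by
        simp [invQParam, abs_of_pos Real.pi_pos]
    _ ≤ |h| / (2 * π) * (|Real.log ‖q‖| + π) := by gcongr


variable {h τ c : ℝ} {g : ℂ → ℂ}

theorem norm_cuspFunction_le (hh : 0 < h) (hτ : 0 ≤ τ)
    (hg : ∀ w, ‖g w‖ ≤ c * Real.exp (τ * ‖w‖)) {q : ℂ} (hq : q ≠ 0) (hq1 : ‖q‖ ≤ 1) :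
    ‖cuspFunction h g q‖ ≤ c * Real.exp (τ * h / 2) * ‖q‖ ^ (-(τ * h / (2 * π))) := by
  have hc : 0 ≤ c := nonneg_of_mul_nonneg_left ((norm_nonneg _).trans (hg 0)) (Real.exp_pos _)
  have hexp : τ * ‖invQParam h q‖ ≤ τ * h / 2 + Real.log ‖q‖ * (-(τ * h / (2 * π))) := by
    have hinv := norm_invQParam_le h q
    rw [abs_of_pos hh, abs_of_nonpos (Real.log_nonpos (norm_nonneg _) hq1)] at hinv
    calc τ * ‖invQParam h q‖ ≤ τ * (h / (2 * π) * (-Real.log ‖q‖ + π)) := by gcongr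
      _ = τ * h / 2 + Real.log ‖q‖ * (-(τ * h / (2 * π))) := by field_simp; ring
  rw [cuspFunction_eq_of_nonzero h g hq]
  calc ‖g (invQParam h q)‖ ≤ c * Real.exp (τ * ‖invQParam h q‖) := hg _
    _ ≤ c * Real.exp (τ * h / 2 + Real.log ‖q‖ * (-(τ * h / (2 * π)))) := by gcongr
    _ = c * Real.exp (τ * h / 2) * ‖q‖ ^ (-(τ * h / (2 * π))) := by
      rw [Real.exp_add, ← Real.rpow_def_of_pos (norm_pos_iff.2 hq), mul_assoc]

theorem cuspFunction_isLittleO_inv (hh : 0 < h) (hτ₀ : 0 ≤ τ) (hτ : τ * h < 2 * π)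
    (hg : ∀ w, ‖g w‖ ≤ c * Real.exp (τ * ‖w‖)) :
    cuspFunction h g =o[𝓝[≠] 0] (·⁻¹) := by
  set a := τ * h / (2 * π)
  have ha : 0 < 1 - a := by
    rw [sub_pos, div_lt_one (by positivity)]
    exact hτ
  have hinv : ∀ᶠ q : ℂ in 𝓝[≠] 0, q⁻¹ = 0 → cuspFunction h g q = 0 :=
    eventually_nhdsWithin_of_forall fun q hq hq0 => absurd (inv_eq_zero.1 hq0) hq
  rw [isLittleO_iff_tendsto' hinv]
  refine squeeze_zero_norm' (a := fun q : ℂ => c * Real.exp (τ * h / 2) * ‖q‖ ^ (1 - a)) ?_ ?_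
  · filter_upwards [self_mem_nhdsWithin, nhdsWithin_le_nhds (closedBall_mem_nhds 0 one_pos)]
      with q hq hq1
    rw [mem_closedBall, dist_zero_right] at hq1
    rw [div_inv_eq_mul, norm_mul, sub_eq_neg_add, Real.rpow_add (norm_pos_iff.2 hq),
      Real.rpow_one, ← mul_assoc]
    gcongr
    exact norm_cuspFunction_le hh hτ₀ hg hq hq1
  · have hcont : Continuous fun q : ℂ => ‖q‖ ^ (1 - a) :=
      continuous_norm.rpow_const fun _ => Or.inr ha.le
    simpa [Real.zero_rpow ha.ne'] using
      ((hcont.tendsto 0).const_mul (c * Real.exp (τ * h / 2))).mono_left nhdsWithin_le_nhds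

theorem differentiable_cuspFunction (hh : 0 < h) (hτ₀ : 0 ≤ τ) (hτ : τ * h < 2 * π)
    (hgd : Differentiable ℂ g) (hper : Periodic g h)
    (hg : ∀ w, ‖g w‖ ≤ c * Real.exp (τ * ‖w‖)) :
    Differentiable ℂ (cuspFunction h g) := by
  rw [← differentiableOn_univ]
  refine differentiableOn_update_limUnder_of_isLittleO univ_mem (fun q hq => ?_) ?_
  · have hq0 : q ≠ 0 := hq.2
    have hdiff := differentiableAt_cuspFunction hh.ne' hper (hgd (invQParam h q))
    rw [qParam_right_inv hh.ne' hq0] at hdiff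
    exact hdiff.differentiableWithinAt.congr (fun x hx => (cuspFunction_eq_of_nonzero h g hx.2).symm)
      (cuspFunction_eq_of_nonzero h g hq0).symm
  · have hconst : (fun _ : ℂ => g (invQParam h 0)) =o[𝓝[≠] 0] (·⁻¹) :=
      isLittleO_const_left.2 (Or.inr tendsto_norm_inv_nhdsNE_zero_atTop)
    simpa only [sub_zero] using ((cuspFunction_isLittleO_inv hh hτ₀ hτ hg).sub hconst).congr'
      (eventually_nhdsWithin_of_forall fun q hq => by simp only [cuspFunction_eq_of_nonzero h g hq, comp_apply])
      EventuallyEq.rfl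


theorem exists_bound_of_im_nonneg (hh : 0 < h) (hτ₀ : 0 ≤ τ) (hτ : τ * h < 2 * π)
    (hgd : Differentiable ℂ g) (hper : Periodic g h)
    (hg : ∀ w, ‖g w‖ ≤ c * Real.exp (τ * ‖w‖)) :
    ∃ M, ∀ w : ℂ, 0 ≤ w.im → ‖g w‖ ≤ M := by
  obtain ⟨M, hM⟩ := (isCompact_closedBall (0 : ℂ) 1).exists_bound_of_continuousOn
    (differentiable_cuspFunction hh hτ₀ hτ hgd hper hg).continuous.continuousOn
  refine ⟨M, fun w hw => ?_⟩
  rw [← eq_cuspFunction hh.ne' hper w]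
  refine hM _ ?_
  rw [mem_closedBall, dist_zero_right, norm_qParam, Real.exp_le_one_iff]
  exact div_nonpos_of_nonpos_of_nonneg (by nlinarith [Real.pi_pos]) hh.le

theorem apply_eq_apply_of_norm_le_exp (hh : 0 < h) (hτ₀ : 0 ≤ τ) (hτ : τ * h < 2 * π)
    (hgd : Differentiable ℂ g) (hper : Periodic g h)
    (hg : ∀ w, ‖g w‖ ≤ c * Real.exp (τ * ‖w‖)) (w w' : ℂ) : g w = g w' := by
  have hper_neg : Periodic (fun w => g (-w)) h := fun w => by
    simpa [neg_add_eq_sub] using hper.sub_eq (-w)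
  obtain ⟨M₁, hM₁⟩ := exists_bound_of_im_nonneg hh hτ₀ hτ hgd hper hg
  obtain ⟨M₂, hM₂⟩ := exists_bound_of_im_nonneg hh hτ₀ hτ (hgd.comp differentiable_neg) hper_neg
    fun w => by simpa using hg (-w)
  refine hgd.apply_eq_apply_of_bounded (isBounded_iff_forall_norm_le.2 ⟨max M₁ M₂, ?_⟩) w w'
  rintro _ ⟨w, rfl⟩
  rcases le_total 0 w.im with hw | hw
  · exact (hM₁ w hw).trans (le_max_left _ _)
  · simpa using (hM₂ (-w) (by simpa using hw)).trans (le_max_right _ _)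

end Function.Periodic

theorem norm_apply_add_smul_le {E F : Type*} [NormedAddCommGroup E] [NormedSpace ℂ E]
    [NormedAddCommGroup F] {f : E → F} {ε c : ℝ} (hε : 0 ≤ ε) (hc : 0 ≤ c)
    (hf : ∀ x, ‖f x‖ ≤ c * Real.exp (ε * ‖x‖)) (z v : E) (w : ℂ) :
    ‖f (z + w • v)‖ ≤ c * Real.exp (ε * ‖z‖) * Real.exp (ε * ‖v‖ * ‖w‖) := by
  calc ‖f (z + w • v)‖ ≤ c * Real.exp (ε * ‖z + w • v‖) := hf _
    _ ≤ c * Real.exp (ε * (‖z‖ + ‖w‖ * ‖v‖)) := by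
      gcongr
      exact (norm_add_le _ _).trans_eq (by rw [norm_smul])
    _ = c * Real.exp (ε * ‖z‖) * Real.exp (ε * ‖v‖ * ‖w‖) := by
      rw [mul_assoc, ← Real.exp_add]; ring_nf

theorem periodic_upgrades_to_complex_line_invariance_general
    (n : ℕ) (f : EuclideanSpace ℂ (Fin n) → ℂ) (hf : Differentiable ℂ f)
    (hgrowth : ∀ ε : ℝ, 0 < ε → ∃ c : ℝ, 0 < c ∧
      ∀ z : EuclideanSpace ℂ (Fin n), ‖f z‖ ≤ c * Real.exp (ε * ‖z‖))
    (v : EuclideanSpace ℂ (Fin n))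
    (hper : ∀ z : EuclideanSpace ℂ (Fin n), f (z + v) = f z) :
    ∀ (z : EuclideanSpace ℂ (Fin n)) (w : ℂ), f (z + w • v) = f z := by
  intro z w
  -- any `ε < 2π / ‖v‖` would do; this one works also for `v = 0`
  obtain ⟨c, hc, hbound⟩ := hgrowth (1 / (‖v‖ + 1)) (by positivity)
  have hτ : 1 / (‖v‖ + 1) * ‖v‖ * 1 < 2 * π := by
    have : ‖v‖ / (‖v‖ + 1) < 1 := (div_lt_one (by positivity)).2 (lt_add_one _)
    rw [mul_one, one_div_mul_eq_div]
    linarith [Real.pi_gt_three]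
  have hline : Function.Periodic (fun u : ℂ => f (z + u • v)) (1 : ℝ) := fun u => by
    simp [add_smul, ← add_assoc, hper]
  simpa using Function.Periodic.apply_eq_apply_of_norm_le_exp one_pos (by positivity) hτ
    (hf.comp ((differentiable_const z).add (differentiable_id.smul_const v))) hline
    (norm_apply_add_smul_le (by positivity) hc.le hbound z v) w 0

/-- If an entire function on ℂⁿ of arbitrarily small exponential type is invariant
under translation by a nonzero vector `v`, then it is invariant along the whole
complex line in the direction `v`. -/
theorem periodic_upgrades_to_complex_line_invariance
    (n : ℕ) (f : EuclideanSpace ℂ (Fin n) → ℂ) (hf : Differentiable ℂ f)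
    (hgrowth : ∀ ε : ℝ, 0 < ε → ∃ c : ℝ, 0 < c ∧
      ∀ z : EuclideanSpace ℂ (Fin n), ‖f z‖ ≤ c * Real.exp (ε * ‖z‖))
    (v : EuclideanSpace ℂ (Fin n)) (hv : v ≠ 0)
    (hper : ∀ z : EuclideanSpace ℂ (Fin n), f (z + v) = f z) :
    ∀ (z : EuclideanSpace ℂ (Fin n)) (w : ℂ), f (z + w • v) = f z :=
  periodic_upgrades_to_complex_line_invariance_general n f hf hgrowth v hper
end

section
/- Let H be an additive subgroup of ℂⁿ whose ℂ-linear span is all of ℂⁿ. Then there exists a constant σ > 0 (depending only on H) such that every entire function f : ℂⁿ → ℂ satisfying: (i) f(z + h) = f(z) for all z ∈ ℂⁿ and all h ∈ H, and (ii) |f(z)| ≤ c·exp(σ'·‖z‖) for all z ∈ ℂⁿ for some constants c > 0 and 0 < σ' < σ, is constant. -/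
/-!
Pick finitely many elements `v` of `H` spanning `ℂⁿ`. Along the complex line through `w` in
direction `v`, an `H`-invariant `f` restricts to a `1`-periodic entire function `g` of exponential
type `σ' ‖v‖`. Shifting the segment `[0, 1]` vertically does not change the Fourier coefficients of
`g`, and pushing it to height `n s` (with `s → ∞`) makes the `n`-th coefficient decay like
`exp ((σ' ‖v‖ - 2π) s)`. So when `σ' ‖v‖ < 2π` all non-constant coefficients vanish, `g` is constant
on `ℝ`, hence on `ℂ`. Thus `f` is constant along each `v`, hence along their span, which is `ℂⁿ`.
-/

open Complex Filter Topology Function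
open scoped Real

theorem Function.Periodic.intervalIntegral_add_mul_I_eq {h : ℂ → ℂ} (hd : Differentiable ℂ h)
    (hp : Periodic h 1) (y : ℝ) : ∫ x : ℝ in 0..1, h (x + y * I) = ∫ x : ℝ in 0..1, h x := by
  have hrect := integral_boundary_rect_eq_zero_of_differentiableOn h 0 (1 + y * I)
    hd.differentiableOn
  have hsides : ∫ t : ℝ in 0..y, h (1 + t * I) = ∫ t : ℝ in 0..y, h (t * I) :=
    intervalIntegral.integral_congr fun t _ => by simpa [add_comm] using hp (t * I)
  simp only [zero_re, zero_im, add_re, one_re, mul_re, ofReal_re, I_re, mul_zero, ofReal_im, I_im,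
    mul_one, sub_self, add_zero, add_im, one_im, mul_im, zero_add, ofReal_zero, zero_mul,
    ofReal_one, hsides] at hrect
  linear_combination -hrect

theorem Function.Periodic.intervalIntegral_cexp_mul_eq_zero {g : ℂ → ℂ} {C a : ℝ}
    (hp : Periodic g 1) (hg : Differentiable ℂ g) (ha0 : 0 ≤ a) (ha : a < 2 * π)
    (hbd : ∀ t, ‖g t‖ ≤ C * Real.exp (a * ‖t‖)) {n : ℤ} (hn : n ≠ 0) :
    ∫ x : ℝ in 0..1, cexp (2 * π * I * n * x) * g x = 0 := by
  set h : ℂ → ℂ := fun w => cexp (2 * π * I * n * w) * g w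
  have hd : Differentiable ℂ h := by fun_prop
  have hph : Periodic h 1 := fun w => by
    have : cexp (2 * π * I * n) = 1 := by
      rw [show 2 * π * I * n = n * (2 * π * I) by ring, exp_int_mul_two_pi_mul_I]
    simp only [h, hp w, mul_add, Complex.exp_add, mul_one, this]
  have hC : 0 ≤ C := by simpa using (norm_nonneg _).trans (hbd 0)
  have hn1 : (1 : ℝ) ≤ |(n : ℝ)| := by exact_mod_cast Int.one_le_abs hn
  have hle (s : ℝ) (hs : 0 ≤ s) :
      ‖∫ x : ℝ in 0..1, h x‖ ≤ C * Real.exp (a + (a - 2 * π) * s) := by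
    rw [← hph.intervalIntegral_add_mul_I_eq hd (n * s)]
    suffices hpt : ∀ x ∈ Set.uIoc (0 : ℝ) 1,
        ‖h (x + ↑(n * s) * I)‖ ≤ C * Real.exp (a + (a - 2 * π) * s) by
      simpa using intervalIntegral.norm_integral_le_of_norm_le_const hpt
    intro x hx
    rw [Set.uIoc_of_le zero_le_one] at hx
    have hz : ‖(x : ℂ) + ↑(n * s) * I‖ ≤ 1 + |(n : ℝ)| * s := by
      refine (norm_le_abs_re_add_abs_im _).trans ?_
      simp [abs_of_pos hx.1, abs_mul, abs_of_nonneg hs, hx.2]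
    calc ‖h (x + ↑(n * s) * I)‖
        = Real.exp (-(2 * π * n * (n * s))) * ‖g (x + ↑(n * s) * I)‖ := by
          simp [h, norm_exp]
      _ ≤ Real.exp (-(2 * π * n * (n * s))) * (C * Real.exp (a * (1 + |(n : ℝ)| * s))) := by
          gcongr; exact (hbd _).trans (by gcongr)
      _ ≤ C * Real.exp (a + (a - 2 * π) * s) := by
          rw [mul_left_comm, ← Real.exp_add]
          refine mul_le_mul_of_nonneg_left (Real.exp_le_exp.2 ?_) hC
          have hk : 0 ≤ s * (|(n : ℝ)| - 1) * (2 * π * (|(n : ℝ)| + 1) - a) :=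
            mul_nonneg (mul_nonneg hs (sub_nonneg.2 hn1)) (by nlinarith [Real.pi_pos])
          linear_combination hk + 2 * π * s * abs_mul_abs_self (n : ℝ)
  have hlim : Tendsto (fun s => C * Real.exp (a + (a - 2 * π) * s)) atTop (𝓝 0) := by
    simpa using (Real.tendsto_exp_atBot.comp (tendsto_atBot_add_const_left _ a
      (tendsto_id.const_mul_atTop_of_neg (sub_neg.2 ha)))).const_mul C
  exact norm_le_zero_iff.1 (ge_of_tendsto hlim ((eventually_ge_atTop 0).mono hle))

theorem ContinuousMap.apply_eq_fourierCoeff_zero {T : ℝ} [Fact (0 < T)] (u : C(AddCircle T, ℂ))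
    (hu : ∀ n ≠ 0, fourierCoeff u n = 0) (x : AddCircle T) : u x = fourierCoeff u 0 := by
  have hsingle : HasSum (fun n => fourierCoeff u n • fourier n) (fourierCoeff u 0 • fourier 0) :=
    hasSum_single 0 fun n hn => by rw [hu n hn]; exact zero_smul ℂ (fourier n : C(AddCircle T, ℂ))
  have hsum : Summable (fourierCoeff u) :=
    summable_of_ne_finset_zero (s := {0}) (by simpa using hu)
  simpa using DFunLike.congr_fun ((hasSum_fourier_series_of_summable hsum).unique hsingle) x

theorem Function.Periodic.apply_eq_intervalIntegral_of_coeff_eq_zero {g : ℝ → ℂ}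
    (hp : Periodic g 1) (hg : Continuous g)
    (hcoeff : ∀ n : ℤ, n ≠ 0 → ∫ x in (0 : ℝ)..1, cexp (2 * π * I * n * x) * g x = 0) (x : ℝ) :
    g x = ∫ x in (0 : ℝ)..1, g x := by
  let u : C(UnitAddCircle, ℂ) := ⟨hp.lift, hg.quotient_liftOn' _⟩
  have hug (x : ℝ) : u x = g x := hp.lift_coe x
  have hu (n : ℤ) :
      fourierCoeff u n = ∫ x in (0 : ℝ)..1, cexp (2 * π * I * ↑(-n) * x) * g x := by
    simp only [fourierCoeff_eq_intervalIntegral _ n 0, fourier_coe_apply, ofReal_one, div_one,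
      one_smul, zero_add, smul_eq_mul, hug]
  simpa [hu, hug] using
    u.apply_eq_fourierCoeff_zero (fun n hn => (hu n).trans (hcoeff _ (neg_ne_zero.2 hn))) x

theorem Complex.eq_of_forall_ofReal_eq {f g : ℂ → ℂ} (hf : Differentiable ℂ f)
    (hg : Differentiable ℂ g) (h : ∀ x : ℝ, f x = g x) : f = g := by
  refine (analyticOnNhd_univ_iff_differentiable.2 hf).eq_of_frequently_eq
    (analyticOnNhd_univ_iff_differentiable.2 hg) (z₀ := 0) ?_
  have hreal : Tendsto ((↑) : ℝ → ℂ) (𝓝[≠] 0) (𝓝[≠] 0) :=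
    continuous_ofReal.continuousWithinAt.tendsto_nhdsWithin fun x hx => by simpa using hx
  exact hreal.frequently (Frequently.of_forall h)

theorem Function.Periodic.apply_eq_apply_zero_of_norm_le_exp {g : ℂ → ℂ} {C a : ℝ}
    (hp : Periodic g 1) (hg : Differentiable ℂ g) (ha0 : 0 ≤ a) (ha : a < 2 * π)
    (hbd : ∀ t, ‖g t‖ ≤ C * Real.exp (a * ‖t‖)) (z : ℂ) : g z = g 0 := by
  have hreal (x : ℝ) : g x = ∫ x in (0 : ℝ)..1, g x :=
    Periodic.apply_eq_intervalIntegral_of_coeff_eq_zero (fun x => by simpa using hp x)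
      (hg.continuous.comp continuous_ofReal)
      (fun _ hn => hp.intervalIntegral_cexp_mul_eq_zero hg ha0 ha hbd hn) x
  rw [Complex.eq_of_forall_ofReal_eq hg (differentiable_const _) hreal]

def Function.invariantDirections (𝕜 : Type*) {E F : Type*} [Semiring 𝕜] [AddCommMonoid E]
    [Module 𝕜 E] (f : E → F) : Submodule 𝕜 E where
  carrier := {v | ∀ (t : 𝕜) (w : E), f (w + t • v) = f w}
  add_mem' {u v} hu hv t w := by rw [smul_add, ← add_assoc, hv, hu]
  zero_mem' t w := by rw [smul_zero, add_zero]
  smul_mem' c v hv t w := by rw [smul_smul]; exact hv _ w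

theorem Function.mem_invariantDirections_of_add_eq {E : Type*} [NormedAddCommGroup E]
    [NormedSpace ℂ E] {f : E → ℂ} {c σ : ℝ} (hf : Differentiable ℂ f) (hσ : 0 ≤ σ)
    (hbd : ∀ z, ‖f z‖ ≤ c * Real.exp (σ * ‖z‖)) {v : E} (hv : ∀ z, f (z + v) = f z)
    (hσv : σ * ‖v‖ < 2 * π) : v ∈ invariantDirections ℂ f := by
  intro t w
  have hc : 0 ≤ c := by simpa using (norm_nonneg _).trans (hbd 0)
  have hline : ∀ s : ℂ, ‖f (w + s • v)‖ ≤ c * Real.exp (σ * ‖w‖) * Real.exp (σ * ‖v‖ * ‖s‖) := by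
    intro s
    refine (hbd _).trans ?_
    rw [mul_assoc, ← Real.exp_add]
    gcongr
    calc σ * ‖w + s • v‖ ≤ σ * (‖w‖ + ‖s‖ * ‖v‖) := by
          gcongr; exact (norm_add_le _ _).trans_eq (by rw [norm_smul])
      _ = σ * ‖w‖ + σ * ‖v‖ * ‖s‖ := by ring
  have hper : Periodic (fun s : ℂ => f (w + s • v)) 1 := fun s => by
    simpa [add_smul, ← add_assoc] using hv (w + s • v)
  simpa using hper.apply_eq_apply_zero_of_norm_le_exp (by fun_prop)
    (mul_nonneg hσ (norm_nonneg v)) hσv hline t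

/-- Liouville-type theorem with a positive threshold of exponential type:
for an additive subgroup `H` of ℂⁿ whose ℂ-linear span is all of ℂⁿ, there is
`σ > 0` such that every `H`-invariant entire function of exponential type
strictly less than `σ` is constant. -/
theorem invariant_below_threshold_exponential_type_constant
    (n : ℕ) (H : AddSubgroup (EuclideanSpace ℂ (Fin n)))
    (hspan : Submodule.span ℂ (H : Set (EuclideanSpace ℂ (Fin n))) = ⊤) :
    ∃ σ : ℝ, 0 < σ ∧
      ∀ f : EuclideanSpace ℂ (Fin n) → ℂ, Differentiable ℂ f →
      (∀ z : EuclideanSpace ℂ (Fin n), ∀ h ∈ H, f (z + h) = f z) →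
      ∀ c σ' : ℝ, 0 < c → 0 < σ' → σ' < σ →
      (∀ z : EuclideanSpace ℂ (Fin n), ‖f z‖ ≤ c * Real.exp (σ' * ‖z‖)) →
      ∀ z : EuclideanSpace ℂ (Fin n), f z = f 0 := by
  obtain ⟨t, htH, -, hspan_t, -⟩ :=
    Submodule.exists_finset_span_eq_linearIndepOn ℂ (H : Set (EuclideanSpace ℂ (Fin n)))
  set R := 1 + ∑ v ∈ t, ‖v‖
  have hR : 0 < R := by positivity
  have htR (v) (hv : v ∈ t) : ‖v‖ < R := by
    have := Finset.single_le_sum (fun v _ => norm_nonneg v) hv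
    linarith
  refine ⟨2 * π / R, by positivity, fun f hf hinv c σ' _ hσ' hσ'σ hbd z => ?_⟩
  have htop : invariantDirections ℂ f = ⊤ := by
    rw [eq_top_iff, ← hspan, ← hspan_t, Submodule.span_le]
    intro v hv
    refine mem_invariantDirections_of_add_eq hf hσ'.le hbd (hinv · v (htH hv)) ?_
    calc σ' * ‖v‖ ≤ 2 * π / R * ‖v‖ := by gcongr
      _ < 2 * π / R * R := by gcongr; exact htR v hv
      _ = 2 * π := div_mul_cancel₀ _ hR.ne'
  simpa using (htop ▸ Submodule.mem_top : z ∈ invariantDirections ℂ f) 1 0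
end

section
/- Let f : ℂⁿ → ℂ be an entire function and let σ > 0, p > 0. Suppose ∫_{ℂⁿ} |f(z)|²·exp(−2σ·√(p + ‖z‖²)) dV(z) < ∞. Then for every σ'' > σ there exists a constant C > 0 such that |f(z)| ≤ C·exp(σ''·‖z‖) for all z ∈ ℂⁿ. -/
/-!
Averaging the one-variable mean value property of `ζ ↦ f (z + ζ • w) ^ 2` over `w` in a polydisc
(a closed ball of the sup norm on `ι → ℂ`), and using that the rotations `w ↦ e^{iθ} • w`
preserve both Lebesgue measure and the polydisc, gives the sub-mean-value inequality
`|f z|² ≤ ⨍_{z + B} |f|²`. Since `√(p + ‖·‖²)` is 1-Lipschitz, the weight is at least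
`exp (-2σ (√(p + ‖z‖²) + √n))` on the unit polydisc around `z`, whence
`|f z| ≤ C exp (σ √(p + ‖z‖²)) ≤ C exp (σ √p) exp (σ ‖z‖)`.
-/

open MeasureTheory Metric Real Set

theorem sqrt_add_norm_add_sq_le {E : Type*} [SeminormedAddCommGroup E] {p : ℝ} (hp : 0 ≤ p)
    (x y : E) : √(p + ‖x + y‖ ^ 2) ≤ √(p + ‖x‖ ^ 2) + ‖y‖ := by
  have hx : ‖x‖ ≤ √(p + ‖x‖ ^ 2) := Real.le_sqrt_of_sq_le (by linarith)
  have hsq : √(p + ‖x‖ ^ 2) ^ 2 = p + ‖x‖ ^ 2 := Real.sq_sqrt (by positivity)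
  rw [Real.sqrt_le_left (by positivity)]
  nlinarith [norm_add_le x y, norm_nonneg (x + y), norm_nonneg y]

theorem Differentiable.norm_sq_le_circleAverage {g : ℂ → ℂ} (hg : Differentiable ℂ g) (c : ℂ)
    (R : ℝ) : ‖g c‖ ^ 2 ≤ circleAverage (fun ζ ↦ ‖g ζ‖ ^ 2) c R := by
  have hmean : circleAverage (fun ζ ↦ g ζ ^ 2) c R = g c ^ 2 :=
    (hg.pow 2).diffContOnCl.circleAverage
  calc ‖g c‖ ^ 2 = ‖circleAverage (fun ζ ↦ g ζ ^ 2) c R‖ := by rw [hmean, norm_pow]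
    _ ≤ circleAverage (fun ζ ↦ ‖g ζ‖ ^ 2) c R := by
      simp only [circleAverage_def, norm_smul, smul_eq_mul, norm_inv, norm_mul,
        Real.norm_ofNat, Real.norm_of_nonneg pi_pos.le]
      gcongr
      exact (intervalIntegral.norm_integral_le_integral_norm two_pi_pos.le).trans_eq
        (by simp only [norm_pow])

theorem Differentiable.ofReal_norm_sq_mul_two_pi_le_lintegral {g : ℂ → ℂ}
    (hg : Differentiable ℂ g) :
    ENNReal.ofReal (‖g 0‖ ^ 2) * ENNReal.ofReal (2 * π)
      ≤ ∫⁻ θ in Ioc 0 (2 * π), ENNReal.ofReal (‖g (circleMap 0 1 θ)‖ ^ 2) := by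
  have hcont : Continuous fun θ ↦ ‖g (circleMap 0 1 θ)‖ ^ 2 := by
    have := hg.continuous
    fun_prop
  rw [← ofReal_integral_eq_lintegral_ofReal hcont.integrableOn_Ioc
      (Filter.Eventually.of_forall fun θ ↦ by positivity),
    ← ENNReal.ofReal_mul (by positivity), ← intervalIntegral.integral_of_le two_pi_pos.le]
  refine ENNReal.ofReal_le_ofReal ?_
  have := hg.norm_sq_le_circleAverage 0 1
  rw [circleAverage_def, smul_eq_mul] at this
  rwa [← le_div_iff₀ two_pi_pos, div_eq_inv_mul]

section Polydisc

variable {ι : Type*} [Fintype ι] {f : (ι → ℂ) → ℂ}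

theorem PiLp.norm_toLp_two_le_sqrt_card_mul {E : Type*} [SeminormedAddCommGroup E]
    (x : ι → E) : ‖WithLp.toLp 2 x‖ ≤ √(Fintype.card ι) * ‖x‖ := by
  rw [PiLp.norm_eq_of_L2, ← Real.sqrt_sq (norm_nonneg x), ← Real.sqrt_mul (by positivity)]
  gcongr
  calc ∑ i, ‖x i‖ ^ 2 ≤ ∑ _i : ι, ‖x‖ ^ 2 := by
        gcongr with i
        exact norm_le_pi_norm x i
    _ = _ := by simp

theorem sqrt_add_norm_toLp_two_sq_le {E : Type*} [SeminormedAddCommGroup E] {p r : ℝ}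
    (hp : 0 ≤ p) {z u : ι → E} (hu : u ∈ closedBall z r) :
    √(p + ‖WithLp.toLp 2 u‖ ^ 2) ≤ √(p + ‖WithLp.toLp 2 z‖ ^ 2) + √(Fintype.card ι) * r := by
  have htri := sqrt_add_norm_add_sq_le hp (WithLp.toLp 2 z) (WithLp.toLp 2 (u - z))
  rw [← WithLp.toLp_add, add_sub_cancel] at htri
  exact htri.trans (by
    grw [PiLp.norm_toLp_two_le_sqrt_card_mul (u - z), mem_closedBall_iff_norm.1 hu])

theorem measurePreserving_circle_smul (c : Circle) :
    MeasurePreserving (fun z : ι → ℂ ↦ (c : ℂ) • z) :=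
  measurePreserving_pi _ _ fun _ ↦ (rotation c).measurePreserving

theorem setLIntegral_closedBall_circle_smul {F : (ι → ℂ) → ENNReal} (hF : Measurable F)
    (c : Circle) (r : ℝ) :
    ∫⁻ w in closedBall 0 r, F ((c : ℂ) • w) = ∫⁻ w in closedBall 0 r, F w := by
  have hB : (fun w : ι → ℂ ↦ (c : ℂ) • w) ⁻¹' closedBall 0 r = closedBall 0 r := by
    ext w
    simp [norm_smul, Circle.norm_coe]
  rw [← (measurePreserving_circle_smul c).setLIntegral_comp_preimage measurableSet_closedBall hF,
    hB]

theorem Differentiable.ofReal_norm_sq_mul_volume_le_setLIntegral_zero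
    (hf : Differentiable ℂ f) (r : ℝ) :
    ENNReal.ofReal (‖f 0‖ ^ 2) * volume (closedBall (0 : ι → ℂ) r)
      ≤ ∫⁻ w in closedBall 0 r, ENNReal.ofReal (‖f w‖ ^ 2) := by
  set B := closedBall (0 : ι → ℂ) r
  have hcont := hf.continuous
  have hmeas : Measurable fun w ↦ ENNReal.ofReal (‖f w‖ ^ 2) := by fun_prop
  have hswap : Measurable (Function.uncurry fun w θ ↦
      ENNReal.ofReal (‖f (circleMap 0 1 θ • w)‖ ^ 2)) :=
    (ENNReal.continuous_ofReal.comp (by fun_prop)).measurable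
  have h2π : ENNReal.ofReal (2 * π) ≠ 0 := by simp [pi_pos]
  refine (ENNReal.mul_le_mul_iff_left h2π ENNReal.ofReal_ne_top).1 ?_
  calc ENNReal.ofReal (‖f 0‖ ^ 2) * volume B * ENNReal.ofReal (2 * π)
      = ∫⁻ _ in B, ENNReal.ofReal (‖f 0‖ ^ 2) * ENNReal.ofReal (2 * π) := by
        rw [setLIntegral_const, mul_right_comm]
    _ ≤ ∫⁻ w in B, ∫⁻ θ in Ioc 0 (2 * π), ENNReal.ofReal (‖f (circleMap 0 1 θ • w)‖ ^ 2) :=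
        lintegral_mono fun w ↦ by
          simpa using
            (hf.comp (differentiable_id.smul_const w)).ofReal_norm_sq_mul_two_pi_le_lintegral
    _ = ∫⁻ θ in Ioc 0 (2 * π), ∫⁻ w in B, ENNReal.ofReal (‖f (circleMap 0 1 θ • w)‖ ^ 2) :=
        lintegral_lintegral_swap hswap.aemeasurable
    _ = ∫⁻ _ in Ioc 0 (2 * π), ∫⁻ w in B, ENNReal.ofReal (‖f w‖ ^ 2) := by
        refine lintegral_congr fun θ ↦ ?_
        have hθ : circleMap 0 1 θ = (Circle.exp θ : ℂ) := by simp [circleMap, Circle.coe_exp]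
        rw [hθ]
        exact setLIntegral_closedBall_circle_smul hmeas _ r
    _ = (∫⁻ w in B, ENNReal.ofReal (‖f w‖ ^ 2)) * ENNReal.ofReal (2 * π) := by
        rw [setLIntegral_const, Real.volume_Ioc, sub_zero]

theorem Differentiable.ofReal_norm_sq_mul_volume_le_setLIntegral (hf : Differentiable ℂ f)
    (z : ι → ℂ) (r : ℝ) :
    ENNReal.ofReal (‖f z‖ ^ 2) * volume (closedBall z r)
      ≤ ∫⁻ u in closedBall z r, ENNReal.ofReal (‖f u‖ ^ 2) := by
  have hmeas : Measurable fun u ↦ ENNReal.ofReal (‖f u‖ ^ 2) := by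
    have := hf.continuous
    fun_prop
  have h := (hf.comp ((differentiable_const z).add differentiable_id))
    |>.ofReal_norm_sq_mul_volume_le_setLIntegral_zero r
  have hpre : (z + ·) ⁻¹' closedBall z r = closedBall 0 r := by simp [preimage_add_closedBall]
  rw [Measure.addHaar_closedBall_center, ← (measurePreserving_add_left volume z)
    |>.setLIntegral_comp_preimage measurableSet_closedBall hmeas, hpre]
  simpa using h

theorem Differentiable.norm_le_exp_mul_sqrt_of_lintegral_ne_top (hf : Differentiable ℂ f)
    {ψ : (ι → ℂ) → ℝ} (hM : ∫⁻ u, ENNReal.ofReal (‖f u‖ ^ 2 * Real.exp (-2 * ψ u)) ≠ ⊤)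
    {z : ι → ℂ} {r K : ℝ} (hr : 0 < r) (hψ : ∀ u ∈ closedBall z r, ψ u ≤ K) :
    ‖f z‖ ≤ Real.exp K *
      √((∫⁻ u, ENNReal.ofReal (‖f u‖ ^ 2 * Real.exp (-2 * ψ u))).toReal
        / (volume (closedBall (0 : ι → ℂ) r)).toReal) := by
  set M := ∫⁻ u, ENNReal.ofReal (‖f u‖ ^ 2 * Real.exp (-2 * ψ u))
  set V := volume (closedBall (0 : ι → ℂ) r)
  have hpoint : ∀ u ∈ closedBall z r, ENNReal.ofReal (‖f u‖ ^ 2) ≤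
      ENNReal.ofReal (Real.exp (2 * K)) * ENNReal.ofReal (‖f u‖ ^ 2 * Real.exp (-2 * ψ u)) := by
    intro u hu
    rw [← ENNReal.ofReal_mul (Real.exp_pos _).le]
    refine ENNReal.ofReal_le_ofReal ?_
    calc ‖f u‖ ^ 2 = Real.exp (2 * ψ u) * (‖f u‖ ^ 2 * Real.exp (-2 * ψ u)) := by
          rw [mul_left_comm, ← Real.exp_add]
          simp
      _ ≤ Real.exp (2 * K) * (‖f u‖ ^ 2 * Real.exp (-2 * ψ u)) := by
          gcongr
          exact hψ u hu
  have hV : ENNReal.ofReal (‖f z‖ ^ 2) * V ≤ ENNReal.ofReal (Real.exp (2 * K)) * M :=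
    calc ENNReal.ofReal (‖f z‖ ^ 2) * V
        = ENNReal.ofReal (‖f z‖ ^ 2) * volume (closedBall z r) := by
          rw [Measure.addHaar_closedBall_center]
      _ ≤ ∫⁻ u in closedBall z r, ENNReal.ofReal (‖f u‖ ^ 2) :=
          hf.ofReal_norm_sq_mul_volume_le_setLIntegral z r
      _ ≤ ∫⁻ u in closedBall z r, ENNReal.ofReal (Real.exp (2 * K)) *
            ENNReal.ofReal (‖f u‖ ^ 2 * Real.exp (-2 * ψ u)) :=
          setLIntegral_mono' measurableSet_closedBall hpoint
      _ ≤ ∫⁻ u, ENNReal.ofReal (Real.exp (2 * K)) *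
            ENNReal.ofReal (‖f u‖ ^ 2 * Real.exp (-2 * ψ u)) :=
          setLIntegral_le_lintegral _ _
      _ = ENNReal.ofReal (Real.exp (2 * K)) * M := lintegral_const_mul' _ _ ENNReal.ofReal_ne_top
  have hV_pos : 0 < V.toReal :=
    ENNReal.toReal_pos (measure_closedBall_pos volume 0 hr).ne' measure_closedBall_lt_top.ne
  have hreal : ‖f z‖ ^ 2 * V.toReal ≤ Real.exp (2 * K) * M.toReal := by
    have := ENNReal.toReal_mono (ENNReal.mul_ne_top ENNReal.ofReal_ne_top hM) hV
    rwa [ENNReal.toReal_mul, ENNReal.toReal_mul, ENNReal.toReal_ofReal (by positivity),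
      ENNReal.toReal_ofReal (Real.exp_pos _).le] at this
  rw [← pow_le_pow_iff_left₀ (norm_nonneg _) (by positivity) two_ne_zero, mul_pow,
    ← Real.exp_nat_mul, sq_sqrt (by positivity), ← mul_div_assoc, le_div_iff₀ hV_pos]
  exact_mod_cast hreal

end Polydisc

/-- Example 2, converse direction: an entire function on ℂⁿ which is square
integrable against the weight `exp(-2σ√(p + ‖z‖²))` (Euclidean norm, Lebesgue
measure) has exponential growth of type at most `σ''` for every `σ'' > σ`. -/
theorem weighted_L2_exp_weight_implies_exponential_growth
    (n : ℕ) (σ p : ℝ) (hσ : 0 < σ) (hp : 0 < p)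
    (f : (Fin n → ℂ) → ℂ) (hf : Differentiable ℂ f)
    (hint : ∫⁻ z : Fin n → ℂ,
        ENNReal.ofReal (‖f z‖ ^ 2 *
          Real.exp (-2 * σ * Real.sqrt (p + ∑ i, ‖z i‖ ^ 2))) < ⊤) :
    ∀ σ'' : ℝ, σ < σ'' → ∃ C : ℝ, 0 < C ∧
      ∀ z : Fin n → ℂ, ‖f z‖ ≤
        C * Real.exp (σ'' * Real.sqrt (∑ i, ‖z i‖ ^ 2)) := by
  intro σ'' hσ''
  have hnorm (z : Fin n → ℂ) : ∑ i, ‖z i‖ ^ 2 = ‖WithLp.toLp 2 z‖ ^ 2 :=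
    (EuclideanSpace.norm_sq_eq _).symm
  -- `mul_assoc` puts the weight in the form `exp (-2 * ψ z)`
  simp only [hnorm, sqrt_sq (norm_nonneg _), mul_assoc] at hint ⊢
  set R := (∫⁻ z : Fin n → ℂ, ENNReal.ofReal (‖f z‖ ^ 2 *
    exp (-2 * (σ * √(p + ‖WithLp.toLp 2 z‖ ^ 2))))).toReal
    / (volume (closedBall (0 : Fin n → ℂ) 1)).toReal
  refine ⟨exp (σ * (√p + √n)) * √R + 1, by positivity, fun z ↦ ?_⟩
  have hψ : ∀ u ∈ closedBall z 1,
      σ * √(p + ‖WithLp.toLp 2 u‖ ^ 2) ≤ σ * (√(p + ‖WithLp.toLp 2 z‖ ^ 2) + √n) :=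
    fun u hu ↦ by
      gcongr
      simpa using sqrt_add_norm_toLp_two_sq_le hp.le hu
  have hz : √(p + ‖WithLp.toLp 2 z‖ ^ 2) ≤ √p + ‖WithLp.toLp 2 z‖ := by
    simpa using sqrt_add_norm_add_sq_le hp.le 0 (WithLp.toLp 2 z)
  calc ‖f z‖ ≤ exp (σ * (√(p + ‖WithLp.toLp 2 z‖ ^ 2) + √n)) * √R :=
        hf.norm_le_exp_mul_sqrt_of_lintegral_ne_top hint.ne one_pos hψ
    _ ≤ exp (σ * (√p + √n)) * exp (σ'' * ‖WithLp.toLp 2 z‖) * √R := by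
        rw [← exp_add]
        gcongr
        nlinarith [norm_nonneg (WithLp.toLp 2 z)]
    _ ≤ (exp (σ * (√p + √n)) * √R + 1) * exp (σ'' * ‖WithLp.toLp 2 z‖) := by
        rw [mul_right_comm]
        gcongr
        linarith
end
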